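/- arXiv:0707.2985 — 2 statements merged into one kernel-verified Lean document; each statement's English description precedes it below -/
import Mathlib

section
/- Let η ∈ c₀* with η_n > 0 for all n and ∑ η_n = ∞. Then H_n − (η_{a²})_n/(η_a)_n → ∞ as n → ∞. -/
/-
Summation by parts gives `∑_{j ≤ n} S_j / j = ∑_{k ≤ n} η_k (H_n - H_{k-1})` for the partial sums
`S_j = η_1 + ⋯ + η_j`, so that `η_{a²} / η_a = (∑_{j ≤ n} S_j / j) / S_n` turns
`H_n - (η_{a²})_n / (η_a)_n` into `(∑_{k ≤ n} η_k H_{k-1}) / S_n`, an average of the harmonic numbers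
with weights `η_k`. The harmonic numbers tend to infinity and the total weight `S_n` diverges,
so the weighted averages tend to infinity as well.
-/

open Finset Filter Real

noncomputable def am (ξ : ℕ → ℝ) (n : ℕ) : ℝ := (∑ j ∈ Finset.Icc 1 n, ξ j) / n

noncomputable def am2 (ξ : ℕ → ℝ) : ℕ → ℝ := am (am ξ)

noncomputable def harm (n : ℕ) : ℝ := ∑ j ∈ Finset.Icc 1 n, (1 : ℝ) / j

lemma sum_Icc_one_eq_sum_range {M : Type*} [AddCommMonoid M] (f : ℕ → M) (n : ℕ) :
    ∑ k ∈ Icc 1 n, f k = ∑ k ∈ range n, f (k + 1) := by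
  rw [range_eq_Ico, sum_Ico_add', zero_add, Ico_add_one_right_eq_Icc]

theorem tendsto_sum_mul_div_sum_atTop {w a : ℕ → ℝ} (hw : ∀ k, 0 ≤ w k)
    (hW : Tendsto (fun n => ∑ k ∈ range n, w k) atTop atTop) (ha : Tendsto a atTop atTop) :
    Tendsto (fun n => (∑ k ∈ range n, w k * a k) / ∑ k ∈ range n, w k) atTop atTop := by
  refine tendsto_atTop.2 fun M => ?_
  obtain ⟨K, hK⟩ := eventually_atTop.1 (ha.eventually_ge_atTop (M + 1))
  set C := ∑ k ∈ range K, w k * (a k - (M + 1))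
  have hC : Tendsto (fun n => C / ∑ k ∈ range n, w k) atTop (nhds 0) :=
    tendsto_const_nhds.div_atTop hW
  filter_upwards [hC.eventually_const_le neg_one_lt_zero, hW.eventually_gt_atTop 0,
    eventually_ge_atTop K] with n hCn hWn hKn
  have htail : C ≤ ∑ k ∈ range n, w k * (a k - (M + 1)) := by
    rw [← sum_range_add_sum_Ico _ hKn, le_add_iff_nonneg_right]
    exact sum_nonneg fun k hk => mul_nonneg (hw k) (sub_nonneg.2 (hK k (mem_Ico.1 hk).1))
  have hshift : C / ∑ k ∈ range n, w k
      ≤ (∑ k ∈ range n, w k * a k) / ∑ k ∈ range n, w k - (M + 1) := by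
    rw [div_sub' hWn.ne', div_le_div_iff_of_pos_right hWn]
    simpa [mul_sub, sum_sub_distrib, sum_mul] using htail
  linarith

lemma harm_eq_harmonic (n : ℕ) : harm n = harmonic n := by
  simp [harm, harmonic_eq_sum_Icc]

lemma harm_succ (n : ℕ) : harm (n + 1) = harm n + 1 / (n + 1) := by
  simp [harm_eq_harmonic, harmonic_succ]

lemma tendsto_harm_atTop : Tendsto harm atTop atTop := by
  refine tendsto_atTop_mono (fun n => ?_) <| tendsto_log_atTop.comp <|
    tendsto_natCast_atTop_atTop.comp (tendsto_add_atTop_nat 1)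
  simpa [harm_eq_harmonic] using log_add_one_le_harmonic n

lemma sum_range_partialSum_div_eq (w : ℕ → ℝ) (n : ℕ) :
    ∑ j ∈ range n, (∑ k ∈ range (j + 1), w k) / (j + 1)
      = ∑ k ∈ range n, w k * (harm n - harm k) := by
  induction n with
  | zero => simp
  | succ n ih =>
    have hsplit : ∑ k ∈ range n, w k * (harm (n + 1) - harm k)
        = ∑ k ∈ range n, w k * (harm n - harm k) + (∑ k ∈ range n, w k) / (n + 1) := by
      simp only [harm_succ, add_sub_right_comm, mul_add, sum_add_distrib, ← sum_div, mul_one_div]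
    rw [sum_range_succ, ih, sum_range_succ (fun k => w k * (harm (n + 1) - harm k)), hsplit,
      sum_range_succ, harm_succ]
    ring

lemma harm_sub_am2_div_am (η : ℕ → ℝ) {n : ℕ} (hS : ∑ k ∈ range n, η (k + 1) ≠ 0) :
    harm n - am2 η n / am η n
      = (∑ k ∈ range n, η (k + 1) * harm k) / ∑ k ∈ range n, η (k + 1) := by
  have hn : (n : ℝ) ≠ 0 := by rintro h; simp [Nat.cast_eq_zero.1 h] at hS
  have ham : ∀ j, am η j = (∑ k ∈ range j, η (k + 1)) / j := fun j => by
    rw [am, sum_Icc_one_eq_sum_range]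
  have ham2 : am2 η n * n = ∑ k ∈ range n, η (k + 1) * (harm n - harm k) := by
    rw [am2, am, div_mul_cancel₀ _ hn, sum_Icc_one_eq_sum_range,
      ← sum_range_partialSum_div_eq]
    simp only [ham, Nat.cast_add, Nat.cast_one]
  have ham' : am η n * n = ∑ k ∈ range n, η (k + 1) := by rw [ham, div_mul_cancel₀ _ hn]
  rw [← mul_div_mul_right _ _ hn, ham2, ham', eq_div_iff hS, sub_mul, div_mul_cancel₀ _ hS]
  simp only [mul_sub, sum_sub_distrib, ← sum_mul]
  ring

theorem stmt_10_general (η : ℕ → ℝ)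
    (hpos : ∀ n : ℕ, 1 ≤ n → 0 < η n)
    (hnotsum : ¬ Summable η) :
    Tendsto (fun n => harm n - am2 η n / am η n) atTop atTop := by
  have hw : ∀ k, 0 ≤ η (k + 1) := fun k => (hpos _ k.succ_pos).le
  have hW : Tendsto (fun n => ∑ k ∈ range n, η (k + 1)) atTop atTop :=
    (not_summable_iff_tendsto_nat_atTop_of_nonneg hw).1 (mt (summable_nat_add_iff 1).1 hnotsum)
  refine (tendsto_sum_mul_div_sum_atTop hw hW tendsto_harm_atTop).congr' ?_
  filter_upwards [hW.eventually_gt_atTop 0] with n hn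
  exact (harm_sub_am2_div_am η hn.ne').symm

theorem stmt_10 (η : ℕ → ℝ)
    (hmono : ∀ n : ℕ, 1 ≤ n → η (n + 1) ≤ η n)
    (hpos : ∀ n : ℕ, 1 ≤ n → 0 < η n)
    (hlim : Tendsto η atTop (nhds 0))
    (hnotsum : ¬ Summable η) :
    Tendsto (fun n => harm n - am2 η n / am η n) atTop atTop :=
  stmt_10_general η hpos hnotsum
end

section
/- Let η ∈ c₀* with all η_n > 0, let m ∈ ℕ, and set n := ⌊m·(η_a)_m/η_m⌋. Then (η_{a²})_n/(η_a)_n > (1/2)·log((η_a)_m/η_m). -/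
open Finset Filter Real

theorem log_div_le_sum_Ico_inv {m n : ℕ} (hm : 0 < m) (hmn : m ≤ n) :
    log ((n : ℝ) / m) ≤ ∑ k ∈ Ico m n, (k : ℝ)⁻¹ := by
  induction n, hmn using Nat.le_induction with
  | base => simp [hm.ne']
  | succ n hmn ih =>
    have hn : (0 : ℝ) < n := by exact_mod_cast hm.trans_le hmn
    have hsplit : log (((n + 1 : ℕ) : ℝ) / m) = log ((n : ℝ) / m) + log ((n + 1) / n) := by
      rw [← log_mul (by positivity) (by positivity)]
      congr 1
      field_simp
      push_cast
      ring
    have hstep : log (((n : ℝ) + 1) / n) ≤ (n : ℝ)⁻¹ := by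
      have hinv : ((n : ℝ) + 1) / n - 1 = (n : ℝ)⁻¹ := by field_simp; ring
      exact (log_le_sub_one_of_pos (by positivity)).trans_eq hinv
    rw [sum_Ico_succ_top hmn, hsplit]
    linarith

section PartialSums

variable {η : ℕ → ℝ}

theorem monotone_sum_Icc_one (hη : ∀ j, 1 ≤ j → 0 ≤ η j) :
    Monotone fun k => ∑ j ∈ Icc 1 k, η j := fun _ _ hkl =>
  sum_le_sum_of_subset_of_nonneg (Icc_subset_Icc_right hkl) fun j hj _ => hη j (mem_Icc.1 hj).1

theorem natCast_mul_le_sum_Icc_one (hη : AntitoneOn η (Set.Ici 1)) (m : ℕ) :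
    (m : ℝ) * η m ≤ ∑ j ∈ Icc 1 m, η j :=
  calc (m : ℝ) * η m = ∑ _j ∈ Icc 1 m, η m := by simp
    _ ≤ ∑ j ∈ Icc 1 m, η j := sum_le_sum fun j hj =>
      have ⟨h1j, hjm⟩ := mem_Icc.1 hj
      hη (Set.mem_Ici.2 h1j) (Set.mem_Ici.2 (h1j.trans hjm)) hjm

theorem le_am_of_antitoneOn (hη : AntitoneOn η (Set.Ici 1)) {m : ℕ} (hm : 1 ≤ m) :
    η m ≤ am η m :=
  (le_div_iff₀ (by exact_mod_cast hm)).2 (by rw [mul_comm]; exact natCast_mul_le_sum_Icc_one hη m)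

theorem sum_Icc_one_le_add_mul (hη : AntitoneOn η (Set.Ici 1)) {m n : ℕ} (hm : 1 ≤ m)
    (hmn : m ≤ n) :
    ∑ j ∈ Icc 1 n, η j ≤ ∑ j ∈ Icc 1 m, η j + ((n : ℝ) - m) * η m := by
  have hsplit : ∑ j ∈ Icc 1 n, η j = ∑ j ∈ Icc 1 m, η j + ∑ j ∈ Ioc m n, η j := by
    have hIcc : ∀ k, Icc 1 k = Ioc 0 k := fun k => Icc_add_one_left_eq_Ioc 0 k
    rw [hIcc, hIcc, sum_Ioc_consecutive η (Nat.zero_le m) hmn]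
  have htail : ∑ j ∈ Ioc m n, η j ≤ ∑ _j ∈ Ioc m n, η m := sum_le_sum fun j hj =>
    hη (Set.mem_Ici.2 hm) (Set.mem_Ici.2 (hm.trans (mem_Ioc.1 hj).1.le)) (mem_Ioc.1 hj).1.le
  rw [sum_const, Nat.card_Ioc, nsmul_eq_mul, Nat.cast_sub hmn] at htail
  linarith

theorem mul_sum_Icc_inv_le_sum_am (hη : ∀ j, 1 ≤ j → 0 ≤ η j) {m n : ℕ}
    (hm : 1 ≤ m) :
    (∑ j ∈ Icc 1 m, η j) * ∑ k ∈ Icc m n, (k : ℝ)⁻¹ ≤ ∑ k ∈ Icc 1 n, am η k := by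
  have ham_nonneg : ∀ k, 0 ≤ am η k := fun k =>
    div_nonneg (sum_nonneg fun j hj => hη j (mem_Icc.1 hj).1) k.cast_nonneg
  calc (∑ j ∈ Icc 1 m, η j) * ∑ k ∈ Icc m n, (k : ℝ)⁻¹
      ≤ ∑ k ∈ Icc m n, am η k := by
        rw [mul_sum]
        refine sum_le_sum fun k hk => ?_
        rw [← div_eq_mul_inv]
        exact div_le_div_of_nonneg_right (monotone_sum_Icc_one hη (mem_Icc.1 hk).1) k.cast_nonneg
    _ ≤ ∑ k ∈ Icc 1 n, am η k :=
        sum_le_sum_of_subset_of_nonneg (Icc_subset_Icc_left hm) fun k _ _ => ham_nonneg k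

theorem mul_log_lt_sum_am (hη : ∀ j, 1 ≤ j → 0 ≤ η j) {m n : ℕ} (hm : 1 ≤ m) (hmn : m ≤ n)
    (hS : 0 < ∑ j ∈ Icc 1 m, η j) {y : ℝ} (hy : 0 < y) (hyn : y < (n + 1) / m) :
    (∑ j ∈ Icc 1 m, η j) * log y < ∑ k ∈ Icc 1 n, am η k :=
  calc (∑ j ∈ Icc 1 m, η j) * log y < (∑ j ∈ Icc 1 m, η j) * log (((n + 1 : ℕ) : ℝ) / m) := by
        refine mul_lt_mul_of_pos_left (log_lt_log hy ?_) hS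
        rwa [Nat.cast_succ]
    _ ≤ (∑ j ∈ Icc 1 m, η j) * ∑ k ∈ Icc m n, (k : ℝ)⁻¹ := by
        rw [← Ico_add_one_right_eq_Icc]
        exact mul_le_mul_of_nonneg_left (log_div_le_sum_Ico_inv hm (by omega)) hS.le
    _ ≤ ∑ k ∈ Icc 1 n, am η k := mul_sum_Icc_inv_le_sum_am hη hm

end PartialSums

theorem am2_div_am (ξ : ℕ → ℝ) {n : ℕ} (hn : n ≠ 0) :
    am2 ξ n / am ξ n = (∑ k ∈ Icc 1 n, am ξ k) / ∑ j ∈ Icc 1 n, ξ j :=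
  div_div_div_cancel_right₀ (Nat.cast_ne_zero.2 hn) _ _

theorem stmt_13_general (η : ℕ → ℝ)
    (hmono : ∀ n : ℕ, 1 ≤ n → η (n + 1) ≤ η n)
    (hpos : ∀ n : ℕ, 1 ≤ n → 0 < η n) :
    ∀ m : ℕ, 1 ≤ m →
      am2 η (⌊(m : ℝ) * am η m / η m⌋₊) / am η (⌊(m : ℝ) * am η m / η m⌋₊) >
        (1 / 2) * Real.log (am η m / η m) := by
  intro m hm
  have hanti : AntitoneOn η (Set.Ici 1) := antitoneOn_nat_Ici_of_succ_le hmono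
  have hnonneg : ∀ j, 1 ≤ j → 0 ≤ η j := fun j hj => (hpos j hj).le
  have hηm := hpos m hm
  have hm0 : (0 : ℝ) < m := by exact_mod_cast hm
  have ham : η m ≤ am η m := le_am_of_antitoneOn hanti hm
  set S := ∑ j ∈ Icc 1 m, η j
  have hmS : (m : ℝ) * η m ≤ S := natCast_mul_le_sum_Icc_one hanti m
  have hS : 0 < S := (mul_pos hm0 hηm).trans_le hmS
  rw [show (m : ℝ) * am η m / η m = S / η m by rw [am, mul_div_cancel₀ _ hm0.ne']]
  set n := ⌊S / η m⌋₊
  have hmx : (m : ℝ) ≤ S / η m := (le_div_iff₀ hηm).2 hmS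
  have hmn : m ≤ n := Nat.le_floor hmx
  have hnS : (n : ℝ) * η m ≤ S := (le_div_iff₀ hηm).1 (Nat.floor_le (hm0.le.trans hmx))
  have hSn : ∑ j ∈ Icc 1 n, η j ≤ 2 * S := by
    nlinarith [sum_Icc_one_le_add_mul hanti hm hmn]
  have hL0 : 0 ≤ log (am η m / η m) := log_nonneg ((one_le_div hηm).2 ham)
  have hA : S * log (am η m / η m) < ∑ k ∈ Icc 1 n, am η k := by
    refine mul_log_lt_sum_am hnonneg hm hmn hS (div_pos (hηm.trans_le ham) hηm) ?_
    rw [am, div_right_comm]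
    exact div_lt_div_of_pos_right (Nat.lt_floor_add_one _) hm0
  rw [am2_div_am η (by omega), gt_iff_lt,
    lt_div_iff₀ (hS.trans_le (monotone_sum_Icc_one hnonneg hmn))]
  nlinarith [mul_le_mul_of_nonneg_left hSn hL0]

theorem stmt_13 (η : ℕ → ℝ)
    (hmono : ∀ n : ℕ, 1 ≤ n → η (n + 1) ≤ η n)
    (hpos : ∀ n : ℕ, 1 ≤ n → 0 < η n)
    (hlim : Tendsto η atTop (nhds 0)) :
    ∀ m : ℕ, 1 ≤ m →
      am2 η (⌊(m : ℝ) * am η m / η m⌋₊) / am η (⌊(m : ℝ) * am η m / η m⌋₊) >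
        (1 / 2) * Real.log (am η m / η m) :=
  stmt_13_general η hmono hpos
end
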